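/- arXiv:1108.0835 — 9 statements merged into one kernel-verified Lean document; each statement's English description precedes it below -/
import Mathlib

section
/- Let φ : ℝ → ℝ be differentiable and strictly convex. Then the one-dimensional Bregman divergence Dφ is monotonic: for all real numbers a < b < c one has 0 ≤ Dφ(a,b) < Dφ(a,c) and 0 ≤ Dφ(b,c) < Dφ(a,c); moreover, for all x, y, Dφ(x,y) = 0 if and only if x = y. -/
/-!
A strictly convex function lies strictly above each of its tangent lines, so `bregman φ x y > 0`
for `x ≠ y`. For `a < b < c` the divergences satisfy the three-point identity
`D(a,c) = D(a,b) + D(b,c) + (φ'(c) - φ'(b)) (b - a)`, and the last term is positive because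
`φ'` is strictly increasing.
-/

/-- The one-dimensional Bregman divergence `Dφ(x,y) = φ(x) − φ(y) − φ'(y)(x−y)`. -/
noncomputable def bregman (φ : ℝ → ℝ) (x y : ℝ) : ℝ :=
  φ x - φ y - deriv φ y * (x - y)

lemma bregman_self (φ : ℝ → ℝ) (x : ℝ) : bregman φ x x = 0 := by
  simp [bregman]

lemma bregman_eq_mul_slope_sub (φ : ℝ → ℝ) {x y : ℝ} (hxy : x ≠ y) :
    bregman φ x y = (x - y) * (slope φ y x - deriv φ y) := by
  rw [slope_def_field, bregman]
  field_simp [sub_ne_zero.mpr hxy]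

lemma bregman_three_point (φ : ℝ → ℝ) (a b c : ℝ) :
    bregman φ a c = bregman φ a b + bregman φ b c + (deriv φ c - deriv φ b) * (b - a) := by
  simp only [bregman]
  ring

namespace StrictConvexOn

variable {S : Set ℝ} {φ : ℝ → ℝ} {x y : ℝ}

lemma bregman_pos (hφ : StrictConvexOn ℝ S φ) (hx : x ∈ S) (hy : y ∈ S)
    (hd : DifferentiableAt ℝ φ y) (hxy : x ≠ y) : 0 < bregman φ x y := by
  rw [bregman_eq_mul_slope_sub φ hxy]
  rcases hxy.lt_or_gt with hlt | hgt
  · have hslope := hφ.slope_lt_deriv hx hy hlt hd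
    rw [slope_comm] at hslope
    exact mul_pos_of_neg_of_neg (sub_neg.mpr hlt) (sub_neg.mpr hslope)
  · exact mul_pos (sub_pos.mpr hgt) (sub_pos.mpr (hφ.deriv_lt_slope hy hx hgt hd))

lemma bregman_eq_zero_iff (hφ : StrictConvexOn ℝ S φ) (hx : x ∈ S) (hy : y ∈ S)
    (hd : DifferentiableAt ℝ φ y) : bregman φ x y = 0 ↔ x = y := by
  refine ⟨fun h => ?_, fun h => h ▸ bregman_self φ x⟩
  by_contra hxy
  exact (hφ.bregman_pos hx hy hd hxy).ne' h

end StrictConvexOn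

theorem bregman_monotonic (φ : ℝ → ℝ) (hdiff : Differentiable ℝ φ)
    (hconv : StrictConvexOn ℝ Set.univ φ) :
    (∀ a b c : ℝ, a < b → b < c →
      (0 ≤ bregman φ a b ∧ bregman φ a b < bregman φ a c) ∧
      (0 ≤ bregman φ b c ∧ bregman φ b c < bregman φ a c)) ∧
    (∀ x y : ℝ, bregman φ x y = 0 ↔ x = y) := by
  have hpos : ∀ x y, x ≠ y → 0 < bregman φ x y := fun x y =>
    hconv.bregman_pos trivial trivial (hdiff y)
  refine ⟨fun a b c hab hbc => ?_, fun x y => hconv.bregman_eq_zero_iff trivial trivial (hdiff y)⟩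
  have hDab := hpos a b hab.ne
  have hDbc := hpos b c hbc.ne
  have hderiv : deriv φ b < deriv φ c :=
    hconv.strictMonoOn_deriv (fun x _ => hdiff x) trivial trivial hbc
  have hgap : 0 < (deriv φ c - deriv φ b) * (b - a) :=
    mul_pos (sub_pos.mpr hderiv) (sub_pos.mpr hab)
  have hsplit := bregman_three_point φ a b c
  exact ⟨⟨hDab.le, by linarith⟩, ⟨hDbc.le, by linarith⟩⟩
end

section
/- Let φ : ℝ → ℝ be differentiable with φ' monotone nondecreasing. Then the square root of the symmetrized Bregman divergence satisfies the reverse triangle inequality: for all a ≤ x ≤ b, √Dsφ(a,x) + √Dsφ(x,b) ≤ √Dsφ(a,b). -/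
/-
With `u = x - a`, `v = b - x`, `p = φ'(x) - φ'(a)`, `q = φ'(b) - φ'(x)`, all nonnegative, the claim
reads `√(u p) + √(v q) ≤ √((u + v)(p + q))` up to the common factor `1/√2`, which is the
Cauchy–Schwarz inequality for the vectors `(√u, √v)` and `(√p, √q)`.
-/

/-- The symmetrized Bregman divergence `Dsφ(x,y) = (1/2)(x−y)(φ'(x) − φ'(y))`. -/
noncomputable def sbregman (φ : ℝ → ℝ) (x y : ℝ) : ℝ :=
  (1 / 2) * (x - y) * (deriv φ x - deriv φ y)

theorem Real.sqrt_mul_add_sqrt_mul_le {u v p q : ℝ} (hu : 0 ≤ u) (hv : 0 ≤ v) (hp : 0 ≤ p)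
    (hq : 0 ≤ q) : √u * √p + √v * √q ≤ √(u + v) * √(p + q) := by
  simpa [Fin.sum_univ_two] using
    Real.sum_sqrt_mul_sqrt_le Finset.univ (f := ![u, v]) (g := ![p, q])
      (Fin.forall_fin_two.2 ⟨hu, hv⟩) (Fin.forall_fin_two.2 ⟨hp, hq⟩)

theorem sqrt_sbregman_of_le (φ : ℝ → ℝ) {x y : ℝ} (hxy : x ≤ y) :
    √(sbregman φ x y) = √((y - x) / 2) * √(deriv φ y - deriv φ x) := by
  rw [← Real.sqrt_mul (by linarith)]
  congr 1
  rw [sbregman]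
  ring

theorem sqrt_sbregman_reverse_triangle_general (φ : ℝ → ℝ)
    (hmono : Monotone (deriv φ)) :
    ∀ a x b : ℝ, a ≤ x → x ≤ b →
      Real.sqrt (sbregman φ a x) + Real.sqrt (sbregman φ x b) ≤
        Real.sqrt (sbregman φ a b) := by
  intro a x b hax hxb
  rw [sqrt_sbregman_of_le φ hax, sqrt_sbregman_of_le φ hxb,
    sqrt_sbregman_of_le φ (hax.trans hxb)]
  calc _ ≤ √((x - a) / 2 + (b - x) / 2) * √((deriv φ x - deriv φ a) + (deriv φ b - deriv φ x)) :=
        Real.sqrt_mul_add_sqrt_mul_le (by linarith) (by linarith)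
          (sub_nonneg.2 (hmono hax)) (sub_nonneg.2 (hmono hxb))
    _ = _ := by congr 2 <;> ring

theorem sqrt_sbregman_reverse_triangle (φ : ℝ → ℝ) (hdiff : Differentiable ℝ φ)
    (hmono : Monotone (deriv φ)) :
    ∀ a x b : ℝ, a ≤ x → x ≤ b →
      Real.sqrt (sbregman φ a x) + Real.sqrt (sbregman φ x b) ≤
        Real.sqrt (sbregman φ a b) :=
  sqrt_sbregman_reverse_triangle_general φ hmono
end

section
/- Let φ be twice continuously differentiable on a compact interval I = [x₁, x₂] with φ''(x) > 0 for all x ∈ I. Then there exists a finite constant μ such that √Dsφ is μ-defective on I: for all a, b, q ∈ I, |√Dsφ(a,q) − √Dsφ(b,q)| ≤ μ·√Dsφ(a,b). -/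
/-!
Let `0 < m ≤ φ''` on `I` and let `K` be a Lipschitz constant of `φ'` on `I`. Then
`Dsφ(x,y) ≥ (m/2)(x−y)²`, and the identity
`2 (Dsφ(a,q) − Dsφ(b,q)) = (a−b)(φ'(a)−φ'(q)) + (b−q)(φ'(a)−φ'(b))` gives
`|Dsφ(a,q) − Dsφ(b,q)| ≤ (K/2)|a−b|(|a−q|+|b−q|)`. Dividing by `√Dsφ(a,q) + √Dsφ(b,q)`, which the
lower bound makes at least `√(m/2)(|a−q|+|b−q|)`, and using `√(m/2)|a−b| ≤ √Dsφ(a,b)` shows that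
`√Dsφ` is `K/m`-defective.
-/

lemma abs_sqrt_sub_sqrt_mul_add {u v : ℝ} (hu : 0 ≤ u) (hv : 0 ≤ v) :
    |√u - √v| * (√u + √v) = |u - v| := by
  rw [← abs_of_nonneg (add_nonneg (Real.sqrt_nonneg u) (Real.sqrt_nonneg v)), ← abs_mul]
  congr 1
  linear_combination Real.sq_sqrt hu - Real.sq_sqrt hv

lemma exists_lipschitzOnWith_of_continuousOn_deriv {𝕜 G : Type*} [RCLike 𝕜]
    [NormedAddCommGroup G] [NormedSpace 𝕜 G] {f : 𝕜 → G} {s : Set 𝕜} (hs : IsCompact s)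
    (hs' : Convex ℝ s) (hf : ∀ x ∈ s, DifferentiableAt 𝕜 f x) (hf' : ContinuousOn (deriv f) s) :
    ∃ K, LipschitzOnWith K f s := by
  obtain ⟨C, hC⟩ := hs.exists_bound_of_continuousOn hf'
  refine ⟨C.toNNReal, hs'.lipschitzOnWith_of_nnnorm_deriv_le hf fun x hx => ?_⟩
  rw [← NNReal.coe_le_coe, coe_nnnorm]
  exact (hC x hx).trans (Real.le_coe_toNNReal C)

section SqrtSbregman

variable {φ : ℝ → ℝ} {s : Set ℝ} {m : ℝ} {K : NNReal} {a b q x y : ℝ}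

lemma half_mul_sq_le_sbregman
    (hmono : ∀ x ∈ s, ∀ y ∈ s, x ≤ y → m * (y - x) ≤ deriv φ y - deriv φ x)
    (hx : x ∈ s) (hy : y ∈ s) : m / 2 * (x - y) ^ 2 ≤ sbregman φ x y := by
  unfold sbregman
  rcases le_total x y with h | h
  · nlinarith [hmono x hx y hy h]
  · nlinarith [hmono y hy x hx h]

lemma sqrt_half_mul_abs_le_sqrt_sbregman
    (hmono : ∀ x ∈ s, ∀ y ∈ s, x ≤ y → m * (y - x) ≤ deriv φ y - deriv φ x)
    (hx : x ∈ s) (hy : y ∈ s) : √(m / 2) * |x - y| ≤ √(sbregman φ x y) := by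
  rw [← Real.sqrt_sq_eq_abs, ← Real.sqrt_mul' _ (sq_nonneg _)]
  exact Real.sqrt_le_sqrt (half_mul_sq_le_sbregman hmono hx hy)

lemma abs_sbregman_sub_sbregman_le (hlip : LipschitzOnWith K (deriv φ) s)
    (ha : a ∈ s) (hb : b ∈ s) (hq : q ∈ s) :
    |sbregman φ a q - sbregman φ b q| ≤ K / 2 * |a - b| * (|a - q| + |b - q|) := by
  have haq : |deriv φ a - deriv φ q| ≤ K * |a - q| := hlip.dist_le_mul a ha q hq
  have hab : |deriv φ a - deriv φ b| ≤ K * |a - b| := hlip.dist_le_mul a ha b hb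
  have hsplit : sbregman φ a q - sbregman φ b q =
      ((a - b) * (deriv φ a - deriv φ q) + (b - q) * (deriv φ a - deriv φ b)) / 2 := by
    unfold sbregman; ring
  calc |sbregman φ a q - sbregman φ b q|
      ≤ (|a - b| * |deriv φ a - deriv φ q| + |b - q| * |deriv φ a - deriv φ b|) / 2 := by
        rw [hsplit, abs_div, abs_two, ← abs_mul, ← abs_mul]
        gcongr
        exact abs_add_le _ _
    _ ≤ (|a - b| * (K * |a - q|) + |b - q| * (K * |a - b|)) / 2 := by gcongr
    _ = K / 2 * |a - b| * (|a - q| + |b - q|) := by ring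

theorem abs_sqrt_sbregman_sub_sqrt_sbregman_le (hm : 0 < m)
    (hmono : ∀ x ∈ s, ∀ y ∈ s, x ≤ y → m * (y - x) ≤ deriv φ y - deriv φ x)
    (hlip : LipschitzOnWith K (deriv φ) s) (ha : a ∈ s) (hb : b ∈ s) (hq : q ∈ s) :
    |√(sbregman φ a q) - √(sbregman φ b q)| ≤ K / m * √(sbregman φ a b) := by
  have hnonneg {x y : ℝ} (hx : x ∈ s) (hy : y ∈ s) : 0 ≤ sbregman φ x y :=
    (mul_nonneg (by positivity) (sq_nonneg _)).trans (half_mul_sq_le_sbregman hmono hx hy)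
  set r := √(m / 2)
  set u := √(sbregman φ a q)
  set v := √(sbregman φ b q)
  have hu : 0 ≤ u := Real.sqrt_nonneg _
  have hv : 0 ≤ v := Real.sqrt_nonneg _
  rcases (add_nonneg hu hv).eq_or_lt with hzero | hpos
  · rw [show u = 0 by linarith, show v = 0 by linarith, sub_zero, abs_zero]
    positivity
  have hsum : r * (|a - q| + |b - q|) ≤ u + v := by
    rw [mul_add]
    exact add_le_add (sqrt_half_mul_abs_le_sqrt_sbregman hmono ha hq)
      (sqrt_half_mul_abs_le_sqrt_sbregman hmono hb hq)
  refine le_of_mul_le_mul_right ?_ hpos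
  calc |u - v| * (u + v)
      = |sbregman φ a q - sbregman φ b q| :=
        abs_sqrt_sub_sqrt_mul_add (hnonneg ha hq) (hnonneg hb hq)
    _ ≤ K / 2 * |a - b| * (|a - q| + |b - q|) := abs_sbregman_sub_sbregman_le hlip ha hb hq
    _ = K / m * (r * |a - b|) * (r * (|a - q| + |b - q|)) := by
        rw [show K / m * (r * |a - b|) * (r * (|a - q| + |b - q|))
            = K / m * r ^ 2 * (|a - b| * (|a - q| + |b - q|)) by ring,
          Real.sq_sqrt (by positivity)]
        field_simp
    _ ≤ K / m * √(sbregman φ a b) * (u + v) := by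
        gcongr
        exact sqrt_half_mul_abs_le_sqrt_sbregman hmono ha hb

end SqrtSbregman

theorem sqrt_sbregman_mu_defective_general (φ : ℝ → ℝ) (x₁ x₂ : ℝ)
    (hd2 : Differentiable ℝ (deriv φ))
    (hcont : ContinuousOn (deriv (deriv φ)) (Set.Icc x₁ x₂))
    (hpos : ∀ x ∈ Set.Icc x₁ x₂, 0 < deriv (deriv φ) x) :
    ∃ μ : ℝ, ∀ a ∈ Set.Icc x₁ x₂, ∀ b ∈ Set.Icc x₁ x₂, ∀ q ∈ Set.Icc x₁ x₂,
      |Real.sqrt (sbregman φ a q) - Real.sqrt (sbregman φ b q)| ≤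
        μ * Real.sqrt (sbregman φ a b) := by
  obtain ⟨m, hm, hm_le⟩ := isCompact_Icc.exists_forall_le' hcont hpos
  obtain ⟨K, hlip⟩ := exists_lipschitzOnWith_of_continuousOn_deriv isCompact_Icc
    (convex_Icc x₁ x₂) (fun x _ => hd2 x) hcont
  have hmono := (convex_Icc x₁ x₂).mul_sub_le_image_sub_of_le_deriv hd2.continuous.continuousOn
    hd2.differentiableOn fun x hx => hm_le x (interior_subset hx)
  exact ⟨K / m, fun a ha b hb q hq =>
    abs_sqrt_sbregman_sub_sqrt_sbregman_le hm hmono hlip ha hb hq⟩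

theorem sqrt_sbregman_mu_defective (φ : ℝ → ℝ) (x₁ x₂ : ℝ)
    (hd1 : Differentiable ℝ φ) (hd2 : Differentiable ℝ (deriv φ))
    (hcont : ContinuousOn (deriv (deriv φ)) (Set.Icc x₁ x₂))
    (hpos : ∀ x ∈ Set.Icc x₁ x₂, 0 < deriv (deriv φ) x) :
    ∃ μ : ℝ, ∀ a ∈ Set.Icc x₁ x₂, ∀ b ∈ Set.Icc x₁ x₂, ∀ q ∈ Set.Icc x₁ x₂,
      |Real.sqrt (sbregman φ a q) - Real.sqrt (sbregman φ b q)| ≤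
        μ * Real.sqrt (sbregman φ a b) :=
  sqrt_sbregman_mu_defective_general φ x₁ x₂ hd2 hcont hpos
end

section
/- Let φ be twice continuously differentiable on a compact interval I = [x₁, x₂] with φ''(x) > 0 for all x ∈ I. Then there exists a finite constant μ such that √Dφ is right-sided μ-defective on I: for all a, b, q ∈ I, |√Dφ(a,q) − √Dφ(b,q)| ≤ μ·√Dφ(b,a). -/
section

variable {φ : ℝ → ℝ} {s : Set ℝ} {x y : ℝ}

lemma ConvexOn.bregman_nonneg (hφ : ConvexOn ℝ s φ) (hd : DifferentiableAt ℝ φ y)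
    (hx : x ∈ s) (hy : y ∈ s) : 0 ≤ bregman φ x y := by
  rcases lt_trichotomy x y with hxy | rfl | hyx
  · have := hφ.slope_le_deriv hx hy hxy hd
    rw [slope_def_field, div_le_iff₀ (sub_pos.2 hxy)] at this
    unfold bregman
    linarith
  · simp [bregman]
  · have := hφ.deriv_le_slope hy hx hyx hd
    rw [slope_def_field, le_div_iff₀ (sub_pos.2 hyx)] at this
    unfold bregman
    linarith

lemma half_mul_sq_le_bregman {m : ℝ} (hs : Convex ℝ s) (hd : Differentiable ℝ φ)
    (hd' : Differentiable ℝ (deriv φ)) (hm : ∀ t ∈ s, m ≤ deriv (deriv φ) t)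
    (hx : x ∈ s) (hy : y ∈ s) : m / 2 * (x - y) ^ 2 ≤ bregman φ x y := by
  set ψ : ℝ → ℝ := fun t => φ t - m / 2 * t ^ 2
  have hψ' : deriv ψ = fun t => deriv φ t - m * t := funext fun t => by
    rw [deriv_fun_sub (hd t) (by fun_prop)]
    simp only [deriv_const_mul_field', deriv_pow_field]
    ring
  have hψ : ConvexOn ℝ s ψ := by
    refine convexOn_of_deriv2_nonneg' hs (by fun_prop) (by rw [hψ']; fun_prop) fun t ht => ?_
    rw [Function.iterate_succ_apply, Function.iterate_one, hψ', deriv_fun_sub (hd' t) (by fun_prop)]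
    simpa using hm t ht
  have := hψ.bregman_nonneg ((hd y).sub (by fun_prop)) hx hy
  simp only [bregman, ψ, hψ'] at this ⊢
  linarith

lemma abs_bregman_sub_bregman_le {M a b q : ℝ} (hs : Convex ℝ s) (hd : Differentiable ℝ φ)
    (hd' : Differentiable ℝ (deriv φ)) (hM : ∀ t ∈ s, |deriv (deriv φ) t| ≤ M)
    (ha : a ∈ s) (hb : b ∈ s) (hq : q ∈ s) :
    |bregman φ a q - bregman φ b q| ≤ M * (|a - q| + |b - q|) * |a - b| := by
  have hlip : ∀ t ∈ s, |deriv φ t - deriv φ q| ≤ M * |t - q| := fun t ht =>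
    hs.norm_image_sub_le_of_norm_deriv_le (fun t _ => hd' t) hM hq ht
  have hderiv : ∀ t, HasDerivAt (bregman φ · q) (deriv φ t - deriv φ q) t := fun t => by
    simpa [bregman] using ((hd t).hasDerivAt.sub_const (φ q)).fun_sub
      (((hasDerivAt_id t).sub_const q).const_mul (deriv φ q))
  refine (convex_uIcc a b).norm_image_sub_le_of_norm_deriv_le
    (fun t _ => (hderiv t).differentiableAt) (fun t ht => ?_) Set.right_mem_uIcc Set.left_mem_uIcc
  rw [(hderiv t).deriv, Real.norm_eq_abs]
  refine (hlip t (hs.ordConnected.uIcc_subset ha hb ht)).trans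
    (mul_le_mul_of_nonneg_left ?_ ((abs_nonneg _).trans (hM q hq)))
  rcases Set.mem_uIcc.1 ht with ⟨h₁, h₂⟩ | ⟨h₁, h₂⟩ <;>
    cases abs_cases (t - q) <;> cases abs_cases (a - q) <;> cases abs_cases (b - q) <;> linarith

lemma mul_abs_sqrt_sub_sqrt_le {x y k V L : ℝ} (hx : 0 ≤ x) (hy : 0 ≤ y) (hL : 0 ≤ L)
    (hsum : k * V ≤ √x + √y) (hdiff : |x - y| ≤ V * L) : k * |√x - √y| ≤ L := by
  have hfactor : |x - y| = (√x + √y) * |√x - √y| := by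
    rw [← abs_of_nonneg (by positivity : 0 ≤ √x + √y), ← abs_mul]
    congr 1
    linear_combination Real.sq_sqrt hy - Real.sq_sqrt hx
  rcases le_or_gt V 0 with hV | hV
  · have : x = y :=
      sub_eq_zero.1 (abs_nonpos_iff.1 (hdiff.trans (mul_nonpos_of_nonpos_of_nonneg hV hL)))
    simpa [this] using hL
  · refine le_of_mul_le_mul_left ?_ hV
    nlinarith [abs_nonneg (√x - √y)]

theorem abs_sqrt_bregman_sub_sqrt_bregman_le {m M a b q : ℝ} (hs : Convex ℝ s)
    (hd : Differentiable ℝ φ) (hd' : Differentiable ℝ (deriv φ)) (hm₀ : 0 < m)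
    (hm : ∀ t ∈ s, m ≤ deriv (deriv φ) t) (hM : ∀ t ∈ s, |deriv (deriv φ) t| ≤ M)
    (ha : a ∈ s) (hb : b ∈ s) (hq : q ∈ s) :
    |√(bregman φ a q) - √(bregman φ b q)| ≤ 2 * M / m * √(bregman φ b a) := by
  set k := √(m / 2)
  have hk : k * k = m / 2 := Real.mul_self_sqrt (by positivity)
  have hlower : ∀ x ∈ s, ∀ y ∈ s, k * |x - y| ≤ √(bregman φ x y) := fun x hx y hy => by
    rw [← Real.sqrt_sq_eq_abs, ← Real.sqrt_mul (by positivity)]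
    exact Real.sqrt_le_sqrt (half_mul_sq_le_bregman hs hd hd' hm hx hy)
  have hnonneg : ∀ x ∈ s, ∀ y ∈ s, 0 ≤ bregman φ x y := fun x hx y hy =>
    le_trans (by positivity) (half_mul_sq_le_bregman hs hd hd' hm hx hy)
  have hM₀ : 0 ≤ M := (abs_nonneg _).trans (hM q hq)
  have hkey : k * |√(bregman φ a q) - √(bregman φ b q)| ≤ M * |a - b| :=
    mul_abs_sqrt_sub_sqrt_le (V := |a - q| + |b - q|) (hnonneg a ha q hq) (hnonneg b hb q hq)
      (by positivity) (by linarith [mul_add k |a - q| |b - q|, hlower a ha q hq, hlower b hb q hq])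
      ((abs_bregman_sub_bregman_le hs hd hd' hM ha hb hq).trans_eq (by ring))
  have hscaled : m / 2 * |√(bregman φ a q) - √(bregman φ b q)| ≤ M * √(bregman φ b a) := calc
    _ = k * (k * |√(bregman φ a q) - √(bregman φ b q)|) := by rw [← hk, mul_assoc]
    _ ≤ k * (M * |a - b|) := mul_le_mul_of_nonneg_left hkey (Real.sqrt_nonneg _)
    _ = M * (k * |b - a|) := by rw [abs_sub_comm]; ring
    _ ≤ M * √(bregman φ b a) := mul_le_mul_of_nonneg_left (hlower b hb a ha) hM₀
  rw [div_mul_eq_mul_div, le_div_iff₀ hm₀]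
  linarith

end

theorem sqrt_bregman_right_mu_defective (φ : ℝ → ℝ) (x₁ x₂ : ℝ)
    (hd1 : Differentiable ℝ φ) (hd2 : Differentiable ℝ (deriv φ))
    (hcont : ContinuousOn (deriv (deriv φ)) (Set.Icc x₁ x₂))
    (hpos : ∀ x ∈ Set.Icc x₁ x₂, 0 < deriv (deriv φ) x) :
    ∃ μ : ℝ, ∀ a ∈ Set.Icc x₁ x₂, ∀ b ∈ Set.Icc x₁ x₂, ∀ q ∈ Set.Icc x₁ x₂,
      |Real.sqrt (bregman φ a q) - Real.sqrt (bregman φ b q)| ≤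
        μ * Real.sqrt (bregman φ b a) := by
  rcases (Set.Icc x₁ x₂).eq_empty_or_nonempty with hI | hI
  · exact ⟨0, by simp [hI]⟩
  obtain ⟨t₀, ht₀, hmin⟩ := isCompact_Icc.exists_isMinOn hI hcont
  obtain ⟨M, hM⟩ := isCompact_Icc.exists_bound_of_continuousOn hcont
  exact ⟨2 * M / deriv (deriv φ) t₀, fun a ha b hb q hq =>
    abs_sqrt_bregman_sub_sqrt_bregman_le (convex_Icc x₁ x₂) hd1 hd2 (hpos t₀ ht₀)
      (fun _ ht => hmin ht) hM ha hb hq⟩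
end

section
/- Let D : ℝ × ℝ → ℝ be a distance function that is monotonic (for all a < b < c: 0 ≤ D(a,b) < D(a,c), 0 ≤ D(b,c) < D(a,c), and D(x,y) = 0 iff x = y) and satisfies the reverse triangle inequality (for all a ≤ b ≤ c: D(a,b) + D(b,c) ≤ D(a,c)). Let a ≤ b with D(a,b) = s, let ℓ > 0, and let I be a finite collection of pairwise disjoint closed intervals [x, x'], each intersecting [a,b] and each satisfying D(x,x') ≥ ℓ. Then the number of intervals in I is at most s/ℓ + 2. -/
/-!
The reverse triangle inequality makes `D` superadditive over disjoint subintervals: listing the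
intervals lying inside `[a, b]` from left to right, their `D`-lengths sum to at most `D a b = s`,
so at most `s / ℓ` of them fit. Any other interval of the family meets `[a, b]` without lying
inside it, hence contains `a` or `b`; by disjointness there is at most one such interval for
each endpoint.
-/

open Finset

section Intervals

variable {α : Type*} [LinearOrder α]

theorem lt_of_disjoint_Icc_of_le {a b c d : α} (h : Disjoint (Set.Icc a b) (Set.Icc c d))
    (hac : a ≤ c) (hcd : c ≤ d) : b < c := by
  by_contra! hcb
  exact h.ne_of_mem ⟨hac, hcb⟩ ⟨le_rfl, hcd⟩ rfl

theorem sum_le_of_pairwiseDisjoint_Icc {β : Type*} [AddCommMonoid β] [PartialOrder β]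
    [IsOrderedAddMonoid β] {D : α → α → β}
    (hsuper : ∀ x y z, x ≤ y → y ≤ z → D x y + D y z ≤ D x z)
    (hnonneg : ∀ x y, x ≤ y → 0 ≤ D x y) {J : Finset (α × α)}
    (hJ : (J : Set (α × α)).PairwiseDisjoint fun p => Set.Icc p.1 p.2)
    (hle : ∀ p ∈ J, p.1 ≤ p.2) {a b : α} (hab : a ≤ b)
    (hsub : ∀ p ∈ J, a ≤ p.1 ∧ p.2 ≤ b) :
    ∑ p ∈ J, D p.1 p.2 ≤ D a b := by
  classical
  induction J using Finset.induction_on_max_value (ι := α × α) (f := Prod.fst) generalizing b with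
  | empty => simpa using hnonneg a b hab
  | insert p J hpJ hmax ih =>
    have hp := mem_insert_self p J
    obtain ⟨hap, hpb⟩ := hsub p hp
    have hbefore : ∀ q ∈ J, q.2 < p.1 := fun q hq =>
      lt_of_disjoint_Icc_of_le (hJ (mem_insert_of_mem hq) hp (ne_of_mem_of_not_mem hq hpJ))
        (hmax q hq) (hle p hp)
    have hJ_sum : ∑ q ∈ J, D q.1 q.2 ≤ D a p.1 :=
      ih (hJ.subset (by simp)) (fun q hq => hle q (mem_insert_of_mem hq)) hap
        (fun q hq => ⟨(hsub q (mem_insert_of_mem hq)).1, (hbefore q hq).le⟩)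
    rw [sum_insert hpJ]
    calc D p.1 p.2 + ∑ q ∈ J, D q.1 q.2 ≤ D a p.1 + D p.1 p.2 := by
          rw [add_comm]; gcongr
      _ ≤ D a p.2 := hsuper _ _ _ hap (hle p hp)
      _ ≤ D a p.2 + D p.2 b := le_add_of_nonneg_right (hnonneg _ _ hpb)
      _ ≤ D a b := hsuper _ _ _ (hap.trans (hle p hp)) hpb

theorem card_filter_mem_Icc_le_one {I : Finset (α × α)}
    (hI : (I : Set (α × α)).PairwiseDisjoint fun p => Set.Icc p.1 p.2) (x : α) :
    #{p ∈ I | x ∈ Set.Icc p.1 p.2} ≤ 1 :=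
  card_le_one.2 fun _ hp _ hq => by
    rw [mem_filter] at hp hq
    exact hI.elim_set hp.1 hq.1 x hp.2 hq.2

theorem card_le_card_filter_subset_add_two {I : Finset (α × α)}
    (hI : (I : Set (α × α)).PairwiseDisjoint fun p => Set.Icc p.1 p.2) {a b : α}
    (hmeet : ∀ p ∈ I, (Set.Icc p.1 p.2 ∩ Set.Icc a b).Nonempty) :
    #I ≤ #{p ∈ I | a ≤ p.1 ∧ p.2 ≤ b} + 2 := by
  have hstraddle : {p ∈ I | ¬(a ≤ p.1 ∧ p.2 ≤ b)} ⊆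
      {p ∈ I | a ∈ Set.Icc p.1 p.2} ∪ {p ∈ I | b ∈ Set.Icc p.1 p.2} := by
    intro p hp
    obtain ⟨hpI, hout⟩ := mem_filter.1 hp
    obtain ⟨z, ⟨hpz, hzp⟩, haz, hzb⟩ := hmeet p hpI
    rw [not_and_or, not_le, not_le] at hout
    rcases hout with h | h
    · exact mem_union_left _ (mem_filter.2 ⟨hpI, h.le, haz.trans hzp⟩)
    · exact mem_union_right _ (mem_filter.2 ⟨hpI, hpz.trans hzb, h.le⟩)
  have hstraddle_card : #{p ∈ I | ¬(a ≤ p.1 ∧ p.2 ≤ b)} ≤ 2 :=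
    calc _ ≤ _ := card_le_card hstraddle
      _ ≤ _ := card_union_le _ _
      _ ≤ 1 + 1 := add_le_add (card_filter_mem_Icc_le_one hI a) (card_filter_mem_Icc_le_one hI b)
  have := card_filter_add_card_filter_not (s := I) (fun p => a ≤ p.1 ∧ p.2 ≤ b)
  omega

end Intervals

theorem interval_packing_general (D : ℝ → ℝ → ℝ)
    (hmono : ∀ a b c : ℝ, a < b → b < c →
      (0 ≤ D a b ∧ D a b < D a c) ∧ (0 ≤ D b c ∧ D b c < D a c))
    (hrefl : ∀ x y : ℝ, D x y = 0 ↔ x = y)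
    (hrti : ∀ a b c : ℝ, a ≤ b → b ≤ c → D a b + D b c ≤ D a c)
    (a b s ℓ : ℝ) (hab : a ≤ b) (hs : D a b = s) (hℓ : 0 < ℓ)
    (I : Finset (ℝ × ℝ))
    (hdisj : ∀ p ∈ I, ∀ q ∈ I, p ≠ q → Disjoint (Set.Icc p.1 p.2) (Set.Icc q.1 q.2))
    (hinter : ∀ p ∈ I, (Set.Icc p.1 p.2 ∩ Set.Icc a b).Nonempty)
    (hlen : ∀ p ∈ I, ℓ ≤ D p.1 p.2) :
    (I.card : ℝ) ≤ s / ℓ + 2 := by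
  have hnonneg : ∀ x y : ℝ, x ≤ y → 0 ≤ D x y := by
    intro x y hxy
    rcases hxy.eq_or_lt with rfl | hlt
    · exact ((hrefl x x).2 rfl).ge
    · exact (hmono x y (y + 1) hlt (lt_add_one y)).1.1
  have hI : (I : Set (ℝ × ℝ)).PairwiseDisjoint fun p => Set.Icc p.1 p.2 :=
    fun p hp q hq => hdisj p hp q hq
  have hle : ∀ p ∈ I, p.1 ≤ p.2 := fun p hp =>
    Set.nonempty_Icc.1 ((hinter p hp).mono Set.inter_subset_left)
  set J := {p ∈ I | a ≤ p.1 ∧ p.2 ≤ b}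
  have hJ : (#J : ℝ) * ℓ ≤ s :=
    calc (#J : ℝ) * ℓ = #J • ℓ := (nsmul_eq_mul _ _).symm
      _ ≤ ∑ p ∈ J, D p.1 p.2 := card_nsmul_le_sum _ _ _ fun p hp => hlen p (mem_filter.1 hp).1
      _ ≤ D a b := sum_le_of_pairwiseDisjoint_Icc hrti hnonneg (hI.subset (filter_subset _ _))
          (fun p hp => hle p (mem_filter.1 hp).1) hab fun p hp => (mem_filter.1 hp).2
      _ = s := hs
  calc (#I : ℝ) ≤ #J + 2 := by exact_mod_cast card_le_card_filter_subset_add_two hI hinter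
    _ ≤ s / ℓ + 2 := by gcongr; rwa [le_div_iff₀ hℓ]

theorem interval_packing (D : ℝ → ℝ → ℝ)
    (hmono : ∀ a b c : ℝ, a < b → b < c →
      (0 ≤ D a b ∧ D a b < D a c) ∧ (0 ≤ D b c ∧ D b c < D a c))
    (hrefl : ∀ x y : ℝ, D x y = 0 ↔ x = y)
    (hrti : ∀ a b c : ℝ, a ≤ b → b ≤ c → D a b + D b c ≤ D a c)
    (a b s ℓ : ℝ) (hab : a ≤ b) (hs : D a b = s) (hℓ : 0 < ℓ)
    (I : Finset (ℝ × ℝ))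
    (hvalid : ∀ p ∈ I, p.1 ≤ p.2)
    (hdisj : ∀ p ∈ I, ∀ q ∈ I, p ≠ q → Disjoint (Set.Icc p.1 p.2) (Set.Icc q.1 q.2))
    (hinter : ∀ p ∈ I, (Set.Icc p.1 p.2 ∩ Set.Icc a b).Nonempty)
    (hlen : ∀ p ∈ I, ℓ ≤ D p.1 p.2) :
    (I.card : ℝ) ≤ s / ℓ + 2 :=
  interval_packing_general D hmono hrefl hrti a b s ℓ hab hs hℓ I hdisj hinter hlen
end

section
/- Let D : ℝ × ℝ → ℝ be a monotonic distance function satisfying the reverse triangle inequality, such that for each fixed x the map y ↦ D(x,y) is continuous. Let a ≤ b with D(a,b) = s > 0 and let 0 < ε ≤ 1. Then there exist points a = x₀ ≤ x₁ ≤ ⋯ ≤ x_r ≤ b with r ≤ 1/ε such that D(xᵢ, xᵢ₊₁) = εs for all 0 ≤ i ≤ r−1 and D(x_r, b) ≤ εs. -/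
/-!
Walk greedily from `a`: while the current point `x` still has `D x b > ε s`, the intermediate
value theorem applied to `D x` on `[x, b]` gives the next point `y` with `D x y = ε s`, and the
reverse triangle inequality gives `D y b ≤ D x b - ε s`. Each step thus lowers the distance to `b`
by `ε s`, so starting from `D a b = s < (⌊1/ε⌋ + 1) ε s` the walk stops after at most `⌊1/ε⌋` steps.
-/

theorem diag_nonpos_of_reverse_triangle {D : ℝ → ℝ → ℝ}
    (hrti : ∀ a b c : ℝ, a ≤ b → b ≤ c → D a b + D b c ≤ D a c) (x : ℝ) : D x x ≤ 0 := by
  linarith [hrti x x x le_rfl le_rfl]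

theorem exists_mem_Icc_dist_eq {D : ℝ → ℝ → ℝ}
    (hrti : ∀ a b c : ℝ, a ≤ b → b ≤ c → D a b + D b c ≤ D a c)
    (hcont : ∀ x : ℝ, Continuous (D x)) {x b δ : ℝ} (hxb : x ≤ b) (hδ : 0 ≤ δ)
    (hδb : δ ≤ D x b) : ∃ y ∈ Set.Icc x b, D x y = δ :=
  intermediate_value_Icc hxb (hcont x).continuousOn
    ⟨(diag_nonpos_of_reverse_triangle hrti x).trans hδ, hδb⟩

theorem exists_greedy_chain {D : ℝ → ℝ → ℝ}
    (hrti : ∀ a b c : ℝ, a ≤ b → b ≤ c → D a b + D b c ≤ D a c)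
    (hcont : ∀ x : ℝ, Continuous (D x)) {b δ : ℝ} (hδ : 0 ≤ δ) (n : ℕ) (x : ℝ) (hxb : x ≤ b)
    (hx : D x b < (n + 1) * δ) :
    ∃ (r : ℕ) (c : ℕ → ℝ), r ≤ n ∧ c 0 = x ∧ (∀ i, i < r → c i ≤ c (i + 1)) ∧ c r ≤ b ∧
      (∀ i, i < r → D (c i) (c (i + 1)) = δ) ∧ D (c r) b ≤ δ := by
  induction n generalizing x with
  | zero => exact ⟨0, fun _ => x, le_rfl, rfl, by simp, hxb, by simp, by simpa using hx.le⟩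
  | succ n ih =>
    by_cases hstop : D x b ≤ δ
    · exact ⟨0, fun _ => x, n.succ.zero_le, rfl, by simp, hxb, by simp, hstop⟩
    obtain ⟨y, ⟨hxy, hyb⟩, hxyδ⟩ :=
      exists_mem_Icc_dist_eq hrti hcont hxb hδ (not_le.1 hstop).le
    have hy : D y b < (n + 1) * δ := by
      push_cast at hx
      linarith [hrti x y b hxy hyb]
    obtain ⟨r, c, hrn, hc0, hcmono, hcb, hcstep, hclast⟩ := ih y hyb hy
    refine ⟨r + 1, fun | 0 => x | i + 1 => c i, by omega, rfl, ?_, hcb, ?_, hclast⟩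
    · rintro (_ | i) hi
      · simpa [hc0] using hxy
      · exact hcmono i (by omega)
    · rintro (_ | i) hi
      · simpa [hc0] using hxyδ
      · exact hcstep i (by omega)

theorem interval_packing_constructive_general (D : ℝ → ℝ → ℝ)
    (hrti : ∀ a b c : ℝ, a ≤ b → b ≤ c → D a b + D b c ≤ D a c)
    (hcont : ∀ x : ℝ, Continuous (D x))
    (a b s ε : ℝ) (hab : a ≤ b) (hs : D a b = s) (hspos : 0 < s)
    (hε0 : 0 < ε) :
    ∃ (r : ℕ) (x : ℕ → ℝ), (r : ℝ) ≤ 1 / ε ∧ x 0 = a ∧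
      (∀ i, i < r → x i ≤ x (i + 1)) ∧ x r ≤ b ∧
      (∀ i, i < r → D (x i) (x (i + 1)) = ε * s) ∧
      D (x r) b ≤ ε * s := by
  set n := ⌊1 / ε⌋₊
  have hεn : 1 < (n + 1) * ε := (div_lt_iff₀ hε0).1 (Nat.lt_floor_add_one (1 / ε))
  have hab_lt : D a b < (n + 1) * (ε * s) := by
    rw [hs, ← mul_assoc]
    exact lt_mul_of_one_lt_left hspos hεn
  obtain ⟨r, x, hrn, hx0, hxmono, hxb, hxstep, hxlast⟩ :=
    exists_greedy_chain hrti hcont (by positivity) n a hab hab_lt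
  exact ⟨r, x, (Nat.cast_le.2 hrn).trans (Nat.floor_le (by positivity)), hx0, hxmono, hxb,
    hxstep, hxlast⟩

theorem interval_packing_constructive (D : ℝ → ℝ → ℝ)
    (hmono : ∀ a b c : ℝ, a < b → b < c →
      (0 ≤ D a b ∧ D a b < D a c) ∧ (0 ≤ D b c ∧ D b c < D a c))
    (hrefl : ∀ x y : ℝ, D x y = 0 ↔ x = y)
    (hrti : ∀ a b c : ℝ, a ≤ b → b ≤ c → D a b + D b c ≤ D a c)
    (hcont : ∀ x : ℝ, Continuous (D x))
    (a b s ε : ℝ) (hab : a ≤ b) (hs : D a b = s) (hspos : 0 < s)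
    (hε0 : 0 < ε) (hε1 : ε ≤ 1) :
    ∃ (r : ℕ) (x : ℕ → ℝ), (r : ℝ) ≤ 1 / ε ∧ x 0 = a ∧
      (∀ i, i < r → x i ≤ x (i + 1)) ∧ x r ≤ b ∧
      (∀ i, i < r → D (x i) (x (i + 1)) = ε * s) ∧
      D (x r) b ≤ ε * s :=
  interval_packing_constructive_general D hrti hcont a b s ε hab hs hspos hε0
end

section
/- Let D be a nonnegative symmetric μ-defective distance on a set M with μ ≥ 1 (so |D(a,q) − D(b,q)| < μ·D(a,b) for all a, b, q ∈ M with a ≠ b), let t > 0 and r > 0, and let w, p, q ∈ M be distinct points with D(w,q) > (1 + t/2)·r and D(w,p) < r. Then D(q,p) > (t/(2μ))·r, and D(w,q) < (1 + 2μ²/t)·D(q,p). -/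
/-!
Defectiveness is a weak triangle inequality `D a q - D b q < μ D a b`. Applied to `q, p` seen
from `w`, the gap `D w q - D w p > (t/2) r` between the outer and inner radii forces
`μ D q p > (t/2) r`. Applied to `w, p` seen from `q`, it gives `D w q < D q p + μ r`, and the
first bound turns `μ r` into at most `(2 μ² / t) D q p`.
-/

def IsDefective {M : Type*} (μ : ℝ) (D : M → M → ℝ) : Prop :=
  ∀ a b q : M, a ≠ b → |D a q - D b q| < μ * D a b

theorem IsDefective.sub_lt {M : Type*} {μ : ℝ} {D : M → M → ℝ} (h : IsDefective μ D)
    {a b : M} (hab : a ≠ b) (q : M) : D a q - D b q < μ * D a b :=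
  (abs_lt.mp (h a b q hab)).2

theorem ring_search_case_one_general {M : Type*} (μ : ℝ) (hμ : 1 ≤ μ)
    (D : M → M → ℝ)
    (hsymm : ∀ a b, D a b = D b a)
    (hdef : ∀ a b q : M, a ≠ b → |D a q - D b q| < μ * D a b)
    (t r : ℝ) (ht : 0 < t)
    (w p q : M) (hwp : w ≠ p) (hpq : p ≠ q)
    (hout : D w q > (1 + t / 2) * r) (hin : D w p < r) :
    D q p > (t / (2 * μ)) * r ∧ D w q < (1 + 2 * μ ^ 2 / t) * D q p := by
  have hD : IsDefective μ D := hdef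
  have hμ0 : 0 < μ := by linarith
  have gap : t / 2 * r < μ * D q p := by
    have := hD.sub_lt hpq.symm w
    rw [hsymm q w, hsymm p w] at this
    linarith
  refine ⟨?_, ?_⟩
  · rw [gt_iff_lt, div_mul_eq_mul_div, div_lt_iff₀ (by positivity)]
    linarith
  · calc D w q < D p q + μ * D w p := by linarith [hD.sub_lt hwp q]
      _ < D q p + μ * r := by rw [hsymm p q]; gcongr
      _ = D q p + 2 * μ / t * (t / 2 * r) := by field_simp
      _ < D q p + 2 * μ / t * (μ * D q p) := by gcongr
      _ = (1 + 2 * μ ^ 2 / t) * D q p := by ring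

theorem ring_search_case_one {M : Type*} (μ : ℝ) (hμ : 1 ≤ μ)
    (D : M → M → ℝ)
    (hnonneg : ∀ a b, 0 ≤ D a b)
    (hsymm : ∀ a b, D a b = D b a)
    (hdef : ∀ a b q : M, a ≠ b → |D a q - D b q| < μ * D a b)
    (t r : ℝ) (ht : 0 < t) (hr : 0 < r)
    (w p q : M) (hwp : w ≠ p) (hwq : w ≠ q) (hpq : p ≠ q)
    (hout : D w q > (1 + t / 2) * r) (hin : D w p < r) :
    D q p > (t / (2 * μ)) * r ∧ D w q < (1 + 2 * μ ^ 2 / t) * D q p :=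
  ring_search_case_one_general μ hμ D hsymm hdef t r ht w p q hwp hpq hout hin
end

section
/- Let D be a nonnegative symmetric μ-defective distance on a set M with μ ≥ 1 (so |D(a,q) − D(b,q)| < μ·D(a,b) for all a, b, q ∈ M with a ≠ b), let t > 0 and r > 0, and let w, p, q ∈ M be distinct points with D(w,q) < (1 + t/2)·r and D(w,p) > (1 + t)·r. Then D(q,p) > (t/(2μ))·r, and D(w,q) < (μ + 2μ/t)·D(q,p). -/
/-! Seen from `w`, the defect bound for the pair `p, q` gives
`μ D(q,p) > D(w,p) - D(w,q) > (1 + t) r - (1 + t/2) r = t r / 2`;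
both claims are rearrangements of this single inequality. -/

section Defective

variable {M : Type*} {μ : ℝ} {D : M → M → ℝ}

theorem sub_lt_mul_of_defective (hsymm : ∀ a b, D a b = D b a)
    (hdef : ∀ a b q : M, a ≠ b → |D a q - D b q| < μ * D a b) {a b q : M} (hab : a ≠ b) :
    D q a - D q b < μ * D b a := by
  have h := (le_abs_self _).trans_lt (hdef a b q hab)
  rwa [hsymm a q, hsymm b q, hsymm a b] at h

theorem half_gap_lt_mul_of_defective (hsymm : ∀ a b, D a b = D b a)
    (hdef : ∀ a b q : M, a ≠ b → |D a q - D b q| < μ * D a b) {t r : ℝ} {w p q : M}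
    (hpq : p ≠ q) (hin : D w q < (1 + t / 2) * r) (hout : (1 + t) * r < D w p) :
    t / 2 * r < μ * D q p := by
  have h := sub_lt_mul_of_defective hsymm hdef (q := w) hpq
  linarith

end Defective

theorem lt_mul_add_div_mul_of_half_lt {x y μ t r : ℝ} (ht : 0 < t)
    (hy : y < (1 + t / 2) * r) (hgap : t / 2 * r < μ * x) :
    y < (μ + 2 * μ / t) * x := by
  have hr : r < 2 * μ / t * x := by
    rw [div_mul_eq_mul_div, lt_div_iff₀ ht]
    linarith
  calc y < (1 + t / 2) * r := hy
    _ ≤ (1 + t / 2) * (2 * μ / t * x) := by gcongr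
    _ = (μ + 2 * μ / t) * x := by field_simp; ring

theorem ring_search_case_two_general {M : Type*} (μ : ℝ) (hμ : 1 ≤ μ)
    (D : M → M → ℝ)
    (hsymm : ∀ a b, D a b = D b a)
    (hdef : ∀ a b q : M, a ≠ b → |D a q - D b q| < μ * D a b)
    (t r : ℝ) (ht : 0 < t)
    (w p q : M) (hpq : p ≠ q)
    (hin : D w q < (1 + t / 2) * r) (hout : D w p > (1 + t) * r) :
    D q p > (t / (2 * μ)) * r ∧ D w q < (μ + 2 * μ / t) * D q p := by
  have hgap := half_gap_lt_mul_of_defective hsymm hdef hpq hin hout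
  have hμ0 : 0 < μ := by linarith
  refine ⟨?_, lt_mul_add_div_mul_of_half_lt ht hin hgap⟩
  rw [gt_iff_lt, div_mul_eq_mul_div, div_lt_iff₀ (by positivity)]
  linarith

theorem ring_search_case_two {M : Type*} (μ : ℝ) (hμ : 1 ≤ μ)
    (D : M → M → ℝ)
    (hnonneg : ∀ a b, 0 ≤ D a b)
    (hsymm : ∀ a b, D a b = D b a)
    (hdef : ∀ a b q : M, a ≠ b → |D a q - D b q| < μ * D a b)
    (t r : ℝ) (ht : 0 < t) (hr : 0 < r)
    (w p q : M) (hwp : w ≠ p) (hwq : w ≠ q) (hpq : p ≠ q)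
    (hin : D w q < (1 + t / 2) * r) (hout : D w p > (1 + t) * r) :
    D q p > (t / (2 * μ)) * r ∧ D w q < (μ + 2 * μ / t) * D q p :=
  ring_search_case_two_general μ hμ D hsymm hdef t r ht w p q hpq hin hout
end

section
/- Let φ be twice continuously differentiable on [x₁, x₂] (with x₁ < x₂) with 0 < m ≤ φ''(x) ≤ M on [x₁, x₂], and let c₀ = √(M/m). Let r_φ = √Dsφ(x₁, x₂), and for an integer k ≥ 1 let aᵢ = x₁ + i·(x₂ − x₁)/k for i = 0, 1, …, k be the endpoints of the subdivision of [x₁, x₂] into k subintervals of equal Euclidean length. Then for every 0 ≤ i ≤ k−1: r_φ/(c₀·k) ≤ √Dsφ(aᵢ, aᵢ₊₁) ≤ c₀·r_φ/k. -/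
lemma add_mul_sub_div_mem_Icc {x₁ x₂ : ℝ} (h : x₁ ≤ x₂) {i k : ℕ} (hik : i ≤ k) :
    x₁ + i * (x₂ - x₁) / k ∈ Set.Icc x₁ x₂ := by
  rcases Nat.eq_zero_or_pos k with rfl | hk
  · simpa [Nat.le_zero.mp hik] using h
  have hk' : (0 : ℝ) < k := by exact_mod_cast hk
  have hik' : (i : ℝ) ≤ k := by exact_mod_cast hik
  have hd : 0 ≤ x₂ - x₁ := sub_nonneg.mpr h
  constructor
  · have : 0 ≤ i * (x₂ - x₁) / k := by positivity
    linarith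
  · have : i * (x₂ - x₁) / k ≤ x₂ - x₁ := by
      rw [div_le_iff₀ hk']
      nlinarith
    linarith

theorem exists_sbregman_eq_mul_sq {φ : ℝ → ℝ} {u v : ℝ} (huv : u < v)
    (hc : ContinuousOn (deriv φ) (Set.Icc u v)) (hd : DifferentiableOn ℝ (deriv φ) (Set.Ioo u v)) :
    ∃ ξ ∈ Set.Ioo u v, sbregman φ u v = deriv (deriv φ) ξ / 2 * (v - u) ^ 2 := by
  obtain ⟨ξ, hξ, hslope⟩ := exists_deriv_eq_slope (deriv φ) huv hc hd
  refine ⟨ξ, hξ, ?_⟩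
  rw [hslope, sbregman]
  field_simp [(sub_pos.mpr huv).ne']
  ring

theorem sbregman_mem_Icc {φ : ℝ → ℝ} {u v m M : ℝ} (huv : u < v)
    (hc : ContinuousOn (deriv φ) (Set.Icc u v)) (hd : DifferentiableOn ℝ (deriv φ) (Set.Ioo u v))
    (hbound : ∀ x ∈ Set.Ioo u v, m ≤ deriv (deriv φ) x ∧ deriv (deriv φ) x ≤ M) :
    sbregman φ u v ∈ Set.Icc (m / 2 * (v - u) ^ 2) (M / 2 * (v - u) ^ 2) := by
  obtain ⟨ξ, hξ, hD⟩ := exists_sbregman_eq_mul_sq huv hc hd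
  obtain ⟨hmξ, hξM⟩ := hbound ξ hξ
  rw [hD]
  constructor <;> gcongr

theorem sbregman_equal_subdivision_mem_Icc {φ : ℝ → ℝ} {x₁ x₂ m M : ℝ} (hlt : x₁ < x₂)
    (hc : ContinuousOn (deriv φ) (Set.Icc x₁ x₂))
    (hd : DifferentiableOn ℝ (deriv φ) (Set.Ioo x₁ x₂))
    (hbound : ∀ x ∈ Set.Icc x₁ x₂, m ≤ deriv (deriv φ) x ∧ deriv (deriv φ) x ≤ M)
    {i k : ℕ} (hik : i < k) :
    sbregman φ (x₁ + i * (x₂ - x₁) / k) (x₁ + (i + 1 : ℕ) * (x₂ - x₁) / k) ∈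
      Set.Icc (m / 2 * ((x₂ - x₁) / k) ^ 2) (M / 2 * ((x₂ - x₁) / k) ^ 2) := by
  have hk : (0 : ℝ) < k := by exact_mod_cast Nat.zero_lt_of_lt hik
  obtain ⟨hu, -⟩ := add_mul_sub_div_mem_Icc hlt.le hik.le
  obtain ⟨-, hv⟩ := add_mul_sub_div_mem_Icc hlt.le hik
  have hstep : x₁ + (i + 1 : ℕ) * (x₂ - x₁) / k - (x₁ + i * (x₂ - x₁) / k) = (x₂ - x₁) / k := by
    push_cast; ring
  have huv : x₁ + i * (x₂ - x₁) / k < x₁ + (i + 1 : ℕ) * (x₂ - x₁) / k := by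
    rw [← sub_pos, hstep]; exact div_pos (sub_pos.mpr hlt) hk
  have hsub : Set.Icc _ _ ⊆ Set.Icc x₁ x₂ := Set.Icc_subset_Icc hu hv
  rw [← hstep]
  exact sbregman_mem_Icc huv (hc.mono hsub) (hd.mono (Set.Ioo_subset_Ioo hu hv))
    fun x hx => hbound x (hsub (Set.Ioo_subset_Icc_self hx))

theorem sqrt_sbregman_equal_subdivision_general (φ : ℝ → ℝ) (x₁ x₂ : ℝ) (hlt : x₁ < x₂)
    (hd2 : Differentiable ℝ (deriv φ))
    (m M : ℝ) (hm : 0 < m)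
    (hbound : ∀ x ∈ Set.Icc x₁ x₂, m ≤ deriv (deriv φ) x ∧ deriv (deriv φ) x ≤ M)
    (c₀ : ℝ) (hc₀ : c₀ = Real.sqrt (M / m))
    (rφ : ℝ) (hr : rφ = Real.sqrt (sbregman φ x₁ x₂))
    (k : ℕ)
    (a : ℕ → ℝ) (ha : ∀ i : ℕ, a i = x₁ + i * (x₂ - x₁) / k) :
    ∀ i : ℕ, i < k →
      rφ / (c₀ * k) ≤ Real.sqrt (sbregman φ (a i) (a (i + 1))) ∧
      Real.sqrt (sbregman φ (a i) (a (i + 1))) ≤ c₀ * rφ / k := by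
  intro i hik
  have hc := hd2.continuous.continuousOn (s := Set.Icc x₁ x₂)
  obtain ⟨hD_lo, hD_hi⟩ := sbregman_mem_Icc hlt hc hd2.differentiableOn
    fun x hx => hbound x (Set.Ioo_subset_Icc_self hx)
  obtain ⟨hDi_lo, hDi_hi⟩ := ha i ▸ ha (i + 1) ▸
    sbregman_equal_subdivision_mem_Icc hlt hc hd2.differentiableOn hbound hik
  have hM : 0 < M := hm.trans_le <| le_of_mul_le_mul_right (by linarith)
    (by positivity : 0 < (x₂ - x₁) ^ 2)
  have hc₀_sq : c₀ ^ 2 = M / m := hc₀ ▸ Real.sq_sqrt (by positivity)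
  have hr_sq : rφ ^ 2 = sbregman φ x₁ x₂ := hr ▸ Real.sq_sqrt (le_trans (by positivity) hD_lo)
  constructor
  · refine le_trans (le_abs_self _) (Real.abs_le_sqrt ?_)
    calc (rφ / (c₀ * k)) ^ 2 = m / M * sbregman φ x₁ x₂ / k ^ 2 := by
          rw [div_pow, mul_pow, hr_sq, hc₀_sq]; field_simp
      _ ≤ m / M * (M / 2 * (x₂ - x₁) ^ 2) / k ^ 2 := by gcongr
      _ = m / 2 * ((x₂ - x₁) / k) ^ 2 := by field_simp
      _ ≤ _ := hDi_lo
  · rw [Real.sqrt_le_left (by rw [hc₀, hr]; positivity)]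
    calc sbregman φ (a i) (a (i + 1)) ≤ M / 2 * ((x₂ - x₁) / k) ^ 2 := hDi_hi
      _ = M / m * (m / 2 * (x₂ - x₁) ^ 2) / k ^ 2 := by field_simp
      _ ≤ M / m * sbregman φ x₁ x₂ / k ^ 2 := by gcongr
      _ = (c₀ * rφ / k) ^ 2 := by rw [div_pow, mul_pow, hr_sq, hc₀_sq]

theorem sqrt_sbregman_equal_subdivision (φ : ℝ → ℝ) (x₁ x₂ : ℝ) (hlt : x₁ < x₂)
    (hd1 : Differentiable ℝ φ) (hd2 : Differentiable ℝ (deriv φ))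
    (hcont : ContinuousOn (deriv (deriv φ)) (Set.Icc x₁ x₂))
    (m M : ℝ) (hm : 0 < m)
    (hbound : ∀ x ∈ Set.Icc x₁ x₂, m ≤ deriv (deriv φ) x ∧ deriv (deriv φ) x ≤ M)
    (c₀ : ℝ) (hc₀ : c₀ = Real.sqrt (M / m))
    (rφ : ℝ) (hr : rφ = Real.sqrt (sbregman φ x₁ x₂))
    (k : ℕ) (hk : 1 ≤ k)
    (a : ℕ → ℝ) (ha : ∀ i : ℕ, a i = x₁ + i * (x₂ - x₁) / k) :
    ∀ i : ℕ, i < k →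
      rφ / (c₀ * k) ≤ Real.sqrt (sbregman φ (a i) (a (i + 1))) ∧
      Real.sqrt (sbregman φ (a i) (a (i + 1))) ≤ c₀ * rφ / k :=
  sqrt_sbregman_equal_subdivision_general φ x₁ x₂ hlt hd2 m M hm hbound c₀ hc₀ rφ hr k a ha
end
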